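/- arXiv:2412.01599 — 4 statements merged into one kernel-verified Lean document; each statement's English description precedes it below -/
import Mathlib

section
/- If A is a 2×2 complex matrix and e^A is diagonalizable, then A is diagonalizable. -/
/-!
Let `r, s` be the eigenvalues of `A`. If `r ≠ s`, eigenvectors for `r` and `s` form an eigenbasis,
whatever `e^A` is. If `r = s`, Cayley–Hamilton makes `N = A - r` square-zero, so
`e^A = e^r (1 + N)`. Then `e^A - e^r = e^r N` is diagonalizable (a shift of `e^A`) and square-zero,
hence zero; so `N = 0` and `A = r` is scalar.
-/

open Matrix

/-- A matrix is diagonalizable over ℂ if it is similar to a diagonal matrix. -/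
def Diagonalizable (A : Matrix (Fin 2) (Fin 2) ℂ) : Prop :=
  ∃ P D : Matrix (Fin 2) (Fin 2) ℂ, IsUnit P.det ∧ D.IsDiag ∧ A = P * D * P⁻¹

namespace NormedSpace
variable {𝔸 : Type*} [Ring 𝔸] [Algebra ℚ 𝔸] [TopologicalSpace 𝔸] [IsTopologicalRing 𝔸]

theorem exp_eq_one_add_of_mul_self_eq_zero {x : 𝔸} (hx : x * x = 0) : exp x = 1 + x := by
  have hvanish : ∀ n ∉ Finset.range 2, ((n.factorial : ℚ)⁻¹ • x ^ n) = 0 := by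
    intro n hn
    obtain ⟨k, rfl⟩ := Nat.exists_eq_add_of_le (not_lt.1 (Finset.mem_range.not.1 hn))
    rw [pow_add, sq, hx, zero_mul, smul_zero]
  rw [exp_eq_tsum_rat]
  dsimp only
  rw [tsum_eq_sum hvanish]
  simp [Finset.sum_range_succ]

end NormedSpace

namespace Matrix
variable {n : Type*} [Fintype n] [DecidableEq n]

theorem exp_smul_one (r : ℂ) : NormedSpace.exp (r • 1 : Matrix n n ℂ) = Complex.exp r • 1 := by
  rw [smul_one_eq_diagonal, exp_diagonal, smul_one_eq_diagonal]
  congr 1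
  ext
  simp [Complex.exp_eq_exp_ℂ]

theorem exp_smul_one_add_of_mul_self_eq_zero (r : ℂ) {N : Matrix n n ℂ} (hN : N * N = 0) :
    NormedSpace.exp (r • 1 + N) = Complex.exp r • (1 + N) := by
  rw [exp_add_of_commute _ _ ((Commute.one_left N).smul_left r), exp_smul_one,
    NormedSpace.exp_eq_one_add_of_mul_self_eq_zero hN, smul_one_mul]

theorem IsDiag.eq_zero_of_mul_self_eq_zero {R : Type*} [Semiring R] [NoZeroDivisors R]
    {D : Matrix n n R} (hD : D.IsDiag) (h : D * D = 0) : D = 0 := by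
  rw [← hD.diagonal_diag, diagonal_mul_diagonal, diagonal_eq_zero] at h
  rw [← hD.diagonal_diag, diagonal_eq_zero]
  exact funext fun i => mul_self_eq_zero.1 (congrFun h i)

theorem exists_add_eq_trace_mul_eq_det {K : Type*} [Field K] [IsAlgClosed K] [NeZero (2 : K)]
    (A : Matrix (Fin 2) (Fin 2) K) : ∃ r s : K, r + s = A.trace ∧ r * s = A.det := by
  obtain ⟨r, hr⟩ := exists_quadratic_eq_zero one_ne_zero
    (IsAlgClosed.exists_eq_mul_self (discrim 1 (-A.trace) A.det))
  exact ⟨r, A.trace - r, by ring, by linear_combination -hr⟩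

theorem sub_smul_one_mul_sub_smul_one_eq_zero {R : Type*} [CommRing R]
    (A : Matrix (Fin 2) (Fin 2) R) {r s : R} (hadd : r + s = A.trace) (hmul : r * s = A.det) :
    (A - r • 1) * (A - s • 1) = 0 := by
  have cayley_hamilton : A * A - A.trace • A + A.det • 1 = 0 := by
    ext i j
    fin_cases i <;> fin_cases j <;> simp [mul_apply, trace_fin_two, det_fin_two] <;> ring
  calc (A - r • 1) * (A - s • 1) = A * A - (r + s) • A + (r * s) • 1 := by
        simp only [sub_mul, mul_sub, smul_mul_assoc, mul_smul_comm, one_mul, mul_one]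
        module
    _ = 0 := by rw [hadd, hmul, cayley_hamilton]

theorem exists_mulVec_eq_smul_of_mul_eq_zero {K : Type*} [Field K] {A : Matrix n n K} {r s : K}
    (h : (A - r • 1) * (A - s • 1) = 0) (hs : A ≠ s • 1) : ∃ v ≠ 0, A *ᵥ v = r • v := by
  obtain ⟨x, hx⟩ : ∃ x, (A - s • 1) *ᵥ x ≠ 0 := by
    by_contra! hzero
    exact hs (sub_eq_zero.1 (ext_of_mulVec_single fun i => by rw [hzero, zero_mulVec]))
  have hker : (A - r • 1) *ᵥ ((A - s • 1) *ᵥ x) = 0 := by rw [mulVec_mulVec, h, zero_mulVec]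
  rw [sub_mulVec, smul_mulVec, one_mulVec] at hker
  exact ⟨_, hx, sub_eq_zero.1 hker⟩

end Matrix

namespace Diagonalizable

theorem smul_one (c : ℂ) : Diagonalizable (c • 1) :=
  ⟨1, c • 1, by simp, isDiag_one.smul c, by simp⟩

theorem sub_smul_one {M : Matrix (Fin 2) (Fin 2) ℂ} (hM : Diagonalizable M) (c : ℂ) :
    Diagonalizable (M - c • 1) := by
  obtain ⟨P, D, hP, hD, rfl⟩ := hM
  refine ⟨P, D - c • 1, hP, hD.sub (isDiag_one.smul c), ?_⟩
  rw [mul_sub, sub_mul, mul_smul_comm, mul_one, smul_mul_assoc, mul_nonsing_inv P hP]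

theorem eq_zero_of_mul_self_eq_zero {M : Matrix (Fin 2) (Fin 2) ℂ} (hM : Diagonalizable M)
    (h : M * M = 0) : M = 0 := by
  obtain ⟨P, D, hP, hD, rfl⟩ := hM
  suffices D = 0 by simp [this]
  refine hD.eq_zero_of_mul_self_eq_zero ?_
  calc D * D = P⁻¹ * (P * D * P⁻¹ * (P * D * P⁻¹)) * P := by
        simp only [mul_assoc, nonsing_inv_mul_cancel_left _ _ hP, nonsing_inv_mul _ hP, mul_one]
    _ = 0 := by rw [h, mul_zero, zero_mul]

end Diagonalizable

theorem diagonalizable_of_mulVec_eq_smul {A : Matrix (Fin 2) (Fin 2) ℂ} {r s : ℂ}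
    {v w : Fin 2 → ℂ} (hrs : r ≠ s) (hv : v ≠ 0) (hw : w ≠ 0) (hAv : A *ᵥ v = r • v)
    (hAw : A *ᵥ w = s • w) : Diagonalizable A := by
  set P : Matrix (Fin 2) (Fin 2) ℂ := (of ![v, w])ᵀ
  have hindep : LinearIndependent ℂ ![v, w] := by
    refine Module.End.eigenvectors_linearIndependent' (toLin' A) ![r, s] (by simpa) _
      fun i => ?_
    fin_cases i <;> simp [Module.End.hasEigenvector_iff, *]
  have hP : IsUnit P.det := by
    rw [det_transpose, ← isUnit_iff_isUnit_det, ← linearIndependent_rows_iff_isUnit]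
    exact hindep
  have hAP : A * P = P * diagonal ![r, s] := by
    ext i j
    fin_cases j
    · simpa [P, mul_comm, mulVec, dotProduct, mul_apply] using congrFun hAv i
    · simpa [P, mul_comm, mulVec, dotProduct, mul_apply] using congrFun hAw i
  refine ⟨P, diagonal ![r, s], hP, isDiag_diagonal _, ?_⟩
  rw [← hAP, mul_nonsing_inv_cancel_right _ _ hP]

theorem diagonalizable_of_add_eq_trace_mul_eq_det {A : Matrix (Fin 2) (Fin 2) ℂ} {r s : ℂ}
    (hrs : r ≠ s) (hadd : r + s = A.trace) (hmul : r * s = A.det) : Diagonalizable A := by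
  have hne {a b : ℂ} (hab : a ≠ b) (hadd : a + b = A.trace) : A ≠ b • 1 := by
    rintro rfl
    rw [trace_smul, trace_one, Fintype.card_fin, smul_eq_mul] at hadd
    exact hab (by linear_combination hadd)
  obtain ⟨v, hv, hAv⟩ := exists_mulVec_eq_smul_of_mul_eq_zero
    (sub_smul_one_mul_sub_smul_one_eq_zero A hadd hmul) (hne hrs hadd)
  obtain ⟨w, hw, hAw⟩ := exists_mulVec_eq_smul_of_mul_eq_zero
    (sub_smul_one_mul_sub_smul_one_eq_zero A (s := r) (by rwa [add_comm]) (by rwa [mul_comm]))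
    (hne hrs.symm (by rwa [add_comm]))
  exact diagonalizable_of_mulVec_eq_smul hrs hv hw hAv hAw

theorem exp_diagonalizable_imp_diagonalizable (A : Matrix (Fin 2) (Fin 2) ℂ)
    (h : Diagonalizable (NormedSpace.exp A)) : Diagonalizable A := by
  obtain ⟨r, s, hadd, hmul⟩ := A.exists_add_eq_trace_mul_eq_det
  rcases ne_or_eq r s with hrs | rfl
  · exact diagonalizable_of_add_eq_trace_mul_eq_det hrs hadd hmul
  set N := A - r • 1 with hN
  have hNN : N * N = 0 := sub_smul_one_mul_sub_smul_one_eq_zero A hadd hmul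
  have hexp : NormedSpace.exp A - Complex.exp r • 1 = Complex.exp r • N := by
    rw [← add_sub_cancel (r • 1) A, ← hN, exp_smul_one_add_of_mul_self_eq_zero r hNN, smul_add,
      add_sub_cancel_left]
  have hcN : Complex.exp r • N = 0 := by
    refine hexp ▸ (h.sub_smul_one _).eq_zero_of_mul_self_eq_zero ?_
    rw [hexp, smul_mul_smul_comm, hNN, smul_zero]
  have hA : A = r • 1 := sub_eq_zero.1 ((smul_eq_zero.1 hcN).resolve_left (Complex.exp_ne_zero r))
  exact hA ▸ Diagonalizable.smul_one r
end

section
/- Let A and B be 2×2 complex matrices such that e^A = e^B, both A and B have all eigenvalues with imaginary part strictly between -π/2 and 3π/2, and A and B are both diagonalizable. Then A = B. -/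
/-!
Exponentiation is injective on the strip `-π/2 < Im z < 3π/2`, so Lagrange interpolation gives a
polynomial `q` with `q (exp λ) = λ` for every eigenvalue `λ` of `A` or of `B`. For a diagonalizable
matrix `M` this forces `q (exp M) = M`, hence `A = q (exp A) = q (exp B) = B`.
-/

open Matrix

open Polynomial Set

theorem Complex.exp_injOn_im_strip {a b : ℝ} (h : b - a ≤ 2 * Real.pi) :
    InjOn exp {z : ℂ | a < z.im ∧ z.im < b} := by
  intro x hx y hy hxy
  obtain ⟨n, hn⟩ := exp_eq_exp_iff_exists_int.1 hxy
  have him : x.im = y.im + n * (2 * Real.pi) := by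
    rw [hn]
    simp
  have hn0 : n = 0 := by
    have : |(n : ℝ)| < 1 := by
      rw [abs_lt]
      constructor <;> nlinarith [hx.1, hx.2, hy.1, hy.2, Real.pi_pos]
    exact Int.abs_lt_one_iff.1 (by exact_mod_cast this)
  simp [hn, hn0]

theorem Set.InjOn.exists_polynomial_leftInvOn {F : Type*} [Field F] {f : F → F} {s : Set F}
    (hs : s.Finite) (hf : InjOn f s) : ∃ q : F[X], LeftInvOn (fun w => q.eval w) f s := by
  classical
  exact ⟨Lagrange.interpolate hs.toFinset f id, fun _ hz =>
    Lagrange.eval_interpolate_at_node id (by simpa using hf) (hs.mem_toFinset.2 hz)⟩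

theorem Polynomial.aeval_units_conj {R A : Type*} [CommSemiring R] [Semiring A] [Algebra R A]
    (u : Aˣ) (x : A) (q : R[X]) : aeval (↑u * x * ↑u⁻¹) q = ↑u * aeval x q * ↑u⁻¹ := by
  induction q using Polynomial.induction_on' with
  | add p q hp hq => simp only [map_add, hp, hq, mul_add, add_mul]
  | monomial k a =>
    simp only [aeval_monomial, Units.conj_pow, ← mul_assoc, Algebra.commutes a (u : A)]

namespace Matrix

variable {n : Type*} [Fintype n] [DecidableEq n]

theorem aeval_diagonal {R : Type*} [CommSemiring R] (d : n → R) (q : R[X]) :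
    aeval (diagonal d) q = diagonal fun i => q.eval (d i) := by
  rw [← diagonalAlgHom_apply (R := R), aeval_algHom_apply, aeval_pi_apply]
  simp

theorem spectrum_units_conj_diagonal {K : Type*} [Field K] (u : (Matrix n n K)ˣ) (d : n → K) :
    spectrum K ((u : Matrix n n K) * diagonal d * (↑u⁻¹ : Matrix n n K)) = range d := by
  rw [spectrum.units_conjugate, spectrum_diagonal]

theorem exp_units_conj_diagonal (u : (Matrix n n ℂ)ˣ) (d : n → ℂ) :
    NormedSpace.exp ((u : Matrix n n ℂ) * diagonal d * (↑u⁻¹ : Matrix n n ℂ)) =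
      ((u : Matrix n n ℂ) * diagonal (fun i => Complex.exp (d i)) * (↑u⁻¹ : Matrix n n ℂ)) := by
  rw [exp_units_conj, exp_diagonal, Pi.exp_def, Complex.exp_eq_exp_ℂ]

theorem aeval_exp_units_conj_diagonal (u : (Matrix n n ℂ)ˣ) (d : n → ℂ) {q : ℂ[X]}
    (hq : LeftInvOn (fun w => q.eval w) Complex.exp (range d)) :
    aeval (NormedSpace.exp ((u : Matrix n n ℂ) * diagonal d * (↑u⁻¹ : Matrix n n ℂ))) q =
      ((u : Matrix n n ℂ) * diagonal d * (↑u⁻¹ : Matrix n n ℂ)) := by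
  rw [exp_units_conj_diagonal, aeval_units_conj, aeval_diagonal]
  simp only [fun i => hq (mem_range_self i)]

end Matrix

theorem Diagonalizable.exists_units_conj_diagonal {A : Matrix (Fin 2) (Fin 2) ℂ}
    (h : Diagonalizable A) :
    ∃ (u : (Matrix (Fin 2) (Fin 2) ℂ)ˣ) (d : Fin 2 → ℂ),
      A = (u : Matrix (Fin 2) (Fin 2) ℂ) * diagonal d * (↑u⁻¹ : Matrix (Fin 2) (Fin 2) ℂ) := by
  obtain ⟨P, D, hP, hD, rfl⟩ := h
  obtain ⟨u, rfl⟩ := (isUnit_iff_isUnit_det P).2 hP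
  exact ⟨u, D.diag, by rw [hD.diagonal_diag, coe_units_inv]⟩

theorem log_unique_diagonalizable (A B : Matrix (Fin 2) (Fin 2) ℂ)
    (hexp : NormedSpace.exp A = NormedSpace.exp B)
    (hA : ∀ z ∈ spectrum ℂ A, -(Real.pi / 2) < z.im ∧ z.im < 3 * Real.pi / 2)
    (hB : ∀ z ∈ spectrum ℂ B, -(Real.pi / 2) < z.im ∧ z.im < 3 * Real.pi / 2)
    (hdA : Diagonalizable A) (hdB : Diagonalizable B) : A = B := by
  obtain ⟨u, d, rfl⟩ := hdA.exists_units_conj_diagonal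
  obtain ⟨v, e, rfl⟩ := hdB.exists_units_conj_diagonal
  rw [spectrum_units_conj_diagonal] at hA hB
  have hinj : InjOn Complex.exp (range d ∪ range e) :=
    (Complex.exp_injOn_im_strip (by linarith)).mono (union_subset hA hB)
  obtain ⟨q, hq⟩ := hinj.exists_polynomial_leftInvOn ((finite_range d).union (finite_range e))
  calc ↑u * diagonal d * ↑u⁻¹
      = aeval (NormedSpace.exp (↑u * diagonal d * ↑u⁻¹)) q :=
        (aeval_exp_units_conj_diagonal u d (hq.mono subset_union_left)).symm
    _ = aeval (NormedSpace.exp (↑v * diagonal e * ↑v⁻¹)) q := by rw [hexp]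
    _ = ↑v * diagonal e * ↑v⁻¹ := aeval_exp_units_conj_diagonal v e (hq.mono subset_union_right)
end

section
/- Let A be a 2×2 complex matrix whose spectrum lies in the open upper half plane. Then log A := ∫₀^∞ ( t/(t²+1)·I − (tI + A)^{-1} ) dt is well-defined (the integrand is integrable and tI + A is invertible for all t ≥ 0). -/
open Matrix MeasureTheory Filter Set

private lemma key_identity (A : Matrix (Fin 2) (Fin 2) ℂ) (t : ℝ)
    (ht : IsUnit ((t : ℂ) • (1 : Matrix (Fin 2) (Fin 2) ℂ) + A).det) :
    ((t / (t ^ 2 + 1) : ℝ) : ℂ) • (1 : Matrix (Fin 2) (Fin 2) ℂ) -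
      ((t : ℂ) • (1 : Matrix (Fin 2) (Fin 2) ℂ) + A)⁻¹ =
    (((t ^ 2 + 1 : ℝ) : ℂ))⁻¹ •
      (((t : ℂ) • (1 : Matrix (Fin 2) (Fin 2) ℂ) + A)⁻¹ * ((t : ℂ) • A - 1)) := by
  set B : Matrix (Fin 2) (Fin 2) ℂ := (t : ℂ) • 1 + A with hB
  set c : ℂ := ((t / (t ^ 2 + 1) : ℝ) : ℂ) with hc
  set d : ℂ := (((t ^ 2 + 1 : ℝ) : ℂ))⁻¹ with hd
  have hne : ((t : ℂ) ^ 2 + 1) ≠ 0 := by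
    have : ((t : ℂ) ^ 2 + 1) = (((t ^ 2 + 1 : ℝ) : ℂ)) := by push_cast; ring
    rw [this]
    exact_mod_cast ne_of_gt (by positivity : (0:ℝ) < t ^ 2 + 1)
  have hcd : c = d * t := by
    rw [hc, hd]; push_cast; field_simp
  have hct : c * t = 1 - d := by
    rw [hc, hd]; push_cast; field_simp; ring
  have hinv : B⁻¹ * B = 1 := nonsing_inv_mul B ht
  have h1 : c • (1 : Matrix (Fin 2) (Fin 2) ℂ) - B⁻¹ = B⁻¹ * (c • B - 1) := by
    rw [mul_sub, mul_smul_comm, hinv, mul_one]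
  have h2 : c • B - 1 = d • ((t : ℂ) • A - 1) := by
    rw [hB, smul_add, smul_smul, smul_sub, smul_smul, hct, ← hcd,
      sub_smul, one_smul]
    abel
  rw [h1, h2, Matrix.mul_smul]

theorem matrix_log_well_defined (A : Matrix (Fin 2) (Fin 2) ℂ)
    (hspec : ∀ z ∈ spectrum ℂ A, 0 < z.im) :
    (∀ t : ℝ, 0 ≤ t → IsUnit ((t : ℂ) • (1 : Matrix (Fin 2) (Fin 2) ℂ) + A).det) ∧
      ∀ i j : Fin 2, MeasureTheory.IntegrableOn
        (fun t : ℝ =>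
          (((t / (t ^ 2 + 1) : ℝ) : ℂ) • (1 : Matrix (Fin 2) (Fin 2) ℂ) -
            ((t : ℂ) • (1 : Matrix (Fin 2) (Fin 2) ℂ) + A)⁻¹) i j)
        (Set.Ici 0) := by
  -- Part 1: invertibility
  have hdet : ∀ t : ℝ, 0 ≤ t → IsUnit ((t : ℂ) • (1 : Matrix (Fin 2) (Fin 2) ℂ) + A).det := by
    intro t ht
    rw [isUnit_iff_ne_zero]
    intro h0
    have hnu : ¬ IsUnit ((t : ℂ) • (1 : Matrix (Fin 2) (Fin 2) ℂ) + A) := by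
      rw [Matrix.isUnit_iff_isUnit_det, h0]
      exact not_isUnit_zero
    have hmem : ((-t : ℝ) : ℂ) ∈ spectrum ℂ A := by
      rw [spectrum.mem_iff]
      intro hu
      apply hnu
      have : algebraMap ℂ (Matrix (Fin 2) (Fin 2) ℂ) ((-t : ℝ) : ℂ) - A =
          -(((t : ℂ)) • (1 : Matrix (Fin 2) (Fin 2) ℂ) + A) := by
        rw [Algebra.algebraMap_eq_smul_one]
        push_cast
        rw [neg_smul]
        abel
      rw [this] at hu
      simpa using hu.neg
    have := hspec _ hmem
    simp at this
  refine ⟨hdet, ?_⟩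
  -- setup
  set M : ℝ → Matrix (Fin 2) (Fin 2) ℂ := fun t => (t : ℂ) • 1 + A with hM
  have hMcont : Continuous M := by
    exact (Complex.continuous_ofReal.smul continuous_const).add continuous_const
  have hinvCA : ∀ t : ℝ, 0 ≤ t → ContinuousAt (fun s => (M s)⁻¹) t := by
    intro t ht
    have hdet' : (M t).det ≠ 0 := by
      have := hdet t ht; rwa [isUnit_iff_ne_zero] at this
    have : ContinuousAt Ring.inverse (M t).det := by
      rw [Ring.inverse_eq_inv']
      exact continuousAt_inv₀ hdet'
    exact (continuousAt_matrix_inv (M t) this).comp hMcont.continuousAt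
  -- continuity of the integrand (matrix-valued)
  have hccont : Continuous fun t : ℝ => ((t / (t ^ 2 + 1) : ℝ) : ℂ) :=
    Complex.continuous_ofReal.comp (continuous_id.div (by continuity)
      (fun x => ne_of_gt (by positivity)))
  have hFcont : ContinuousOn
      (fun t : ℝ => ((t / (t ^ 2 + 1) : ℝ) : ℂ) • (1 : Matrix (Fin 2) (Fin 2) ℂ) - (M t)⁻¹)
      (Set.Ici 0) := by
    apply ContinuousOn.sub
    · exact (hccont.smul continuous_const).continuousOn
    · intro t ht
      exact (hinvCA t ht).continuousWithinAt
  -- the auxiliary function h and its limit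
  have hentry : ∀ i j : Fin 2, Continuous fun m : Matrix (Fin 2) (Fin 2) ℂ => m i j :=
    fun i j => (continuous_apply j).comp (continuous_apply i)
  set F : ℝ → Matrix (Fin 2) (Fin 2) ℂ :=
    fun s => ((1 : Matrix (Fin 2) (Fin 2) ℂ) + (s : ℂ) • A)⁻¹ * (A - (s : ℂ) • 1) with hF
  have hFat0 : ContinuousAt F 0 := by
    set N : ℝ → Matrix (Fin 2) (Fin 2) ℂ :=
      fun s => (1 : Matrix (Fin 2) (Fin 2) ℂ) + (s : ℂ) • A with hNdef
    have hN : Continuous N :=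
      continuous_const.add (Complex.continuous_ofReal.smul continuous_const)
    have hdet1 : ContinuousAt Ring.inverse (N 0).det := by
      rw [Ring.inverse_eq_inv']
      apply continuousAt_inv₀
      simp [hNdef]
    have h1 : ContinuousAt (fun s : ℝ => (N s)⁻¹) 0 :=
      (continuousAt_matrix_inv (N 0) hdet1).comp hN.continuousAt
    exact h1.mul (continuous_const.sub
      (Complex.continuous_ofReal.smul continuous_const)).continuousAt
  have hF0 : F 0 = A := by
    simp [hF]
  set h : ℝ → Matrix (Fin 2) (Fin 2) ℂ := fun t => (M t)⁻¹ * ((t : ℂ) • A - 1) with hh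
  have hEq : ∀ t : ℝ, 0 < t → h t = F t⁻¹ := by
    intro t ht
    have htne : (t : ℂ) ≠ 0 := by exact_mod_cast ne_of_gt ht
    have hu : IsUnit (M t).det := hdet t ht.le
    set u : ℂˣ := Units.mk0 ((t : ℂ)⁻¹) (inv_ne_zero htne) with hu'
    have e1 : (1 : Matrix (Fin 2) (Fin 2) ℂ) + ((t⁻¹ : ℝ) : ℂ) • A = u • M t := by
      rw [Units.smul_def, hM]
      simp only [hu', Units.val_mk0]
      rw [smul_add, smul_smul]
      push_cast
      rw [inv_mul_cancel₀ htne, one_smul]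
    have e2 : A - ((t⁻¹ : ℝ) : ℂ) • 1 = ((t : ℂ)⁻¹) • ((t : ℂ) • A - 1) := by
      rw [smul_sub, smul_smul, inv_mul_cancel₀ htne, one_smul]
      push_cast
      ring_nf
    rw [hh]
    show (M t)⁻¹ * ((t : ℂ) • A - 1) =
      ((1 : Matrix (Fin 2) (Fin 2) ℂ) + ((t⁻¹ : ℝ) : ℂ) • A)⁻¹ *
        (A - ((t⁻¹ : ℝ) : ℂ) • (1 : Matrix (Fin 2) (Fin 2) ℂ))
    rw [e1, e2, Matrix.inv_smul' (M t) u hu, Units.smul_def]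
    have hcu : ((u⁻¹ : ℂˣ) : ℂ) = (t : ℂ) := by simp [hu']
    rw [hcu, smul_mul_assoc, Matrix.mul_smul, smul_smul, mul_inv_cancel₀ htne, one_smul]
  have hTend : Tendsto h atTop (nhds A) := by
    have h1 : Tendsto (fun t : ℝ => F t⁻¹) atTop (nhds A) := by
      rw [← hF0]
      exact hFat0.tendsto.comp tendsto_inv_atTop_zero
    apply h1.congr'
    filter_upwards [eventually_gt_atTop 0] with t ht
    exact (hEq t ht).symm
  -- integrability for each entry
  intro i j
  have hTendij : Tendsto (fun t => h t i j) atTop (nhds (A i j)) :=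
    ((hentry i j).continuousAt).tendsto.comp hTend
  have hbound : ∀ᶠ t : ℝ in atTop, ‖h t i j‖ ≤ ‖A i j‖ + 1 :=
    (hTendij.norm).eventually (eventually_le_nhds (lt_add_one _))
  have hBigO : (fun t : ℝ =>
      (((t / (t ^ 2 + 1) : ℝ) : ℂ) • (1 : Matrix (Fin 2) (Fin 2) ℂ) - (M t)⁻¹) i j)
      =O[atTop] fun t : ℝ => (1 + t ^ 2)⁻¹ := by
    apply Asymptotics.IsBigO.of_bound (‖A i j‖ + 1)
    filter_upwards [eventually_ge_atTop 0, hbound] with t ht hb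
    have hid := key_identity A t (hdet t ht)
    have : (((t / (t ^ 2 + 1) : ℝ) : ℂ) • (1 : Matrix (Fin 2) (Fin 2) ℂ) - (M t)⁻¹) i j =
        (((t ^ 2 + 1 : ℝ) : ℂ))⁻¹ * h t i j := by
      rw [hM, hid]
      simp only [Matrix.smul_apply, smul_eq_mul, hh, hM]
    rw [this]
    rw [norm_mul]
    have hpos : (0:ℝ) < t ^ 2 + 1 := by positivity
    have hn1 : ‖(((t ^ 2 + 1 : ℝ) : ℂ))⁻¹‖ = (t ^ 2 + 1)⁻¹ := by
      rw [norm_inv, Complex.norm_real, Real.norm_of_nonneg hpos.le]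
    rw [hn1]
    have hn2 : ‖(1 + t ^ 2)⁻¹‖ = (t ^ 2 + 1)⁻¹ := by
      rw [Real.norm_of_nonneg (by positivity), add_comm]
    rw [hn2, mul_comm]
    apply mul_le_mul_of_nonneg_right hb (by positivity)
  have hloc : LocallyIntegrableOn
      (fun t : ℝ =>
        (((t / (t ^ 2 + 1) : ℝ) : ℂ) • (1 : Matrix (Fin 2) (Fin 2) ℂ) - (M t)⁻¹) i j)
      (Set.Ici 0) := by
    apply ContinuousOn.locallyIntegrableOn _ measurableSet_Ici
    exact (hentry i j).comp_continuousOn hFcont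
  have hIAF : IntegrableAtFilter (fun t : ℝ => (1 + t ^ 2)⁻¹) atTop
      (volume : Measure ℝ) :=
    ⟨Set.univ, univ_mem, integrable_inv_one_add_sq.integrableOn⟩
  exact hloc.integrableOn_of_isBigO_atTop hBigO hIAF
end

section
/- With M defined as M = (−1/(m₊+m₋))·[[−2m₊m₋, m₊−m₋],[m₊−m₋, 2]] for m₊, m₋ in the open upper half plane, the imaginary part Im M = (M − M*)/(2i) is positive definite. -/
open Matrix Complex
open scoped ComplexOrder

set_option maxHeartbeats 2000000 in
theorem M_matrix_im_posDef (mp mm : ℂ) (hp : 0 < mp.im) (hm : 0 < mm.im) :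
    let M : Matrix (Fin 2) (Fin 2) ℂ :=
      (-(mp + mm)⁻¹) • !![-2 * mp * mm, mp - mm; mp - mm, 2]
    Matrix.PosDef ((2 * Complex.I)⁻¹ • (M - Mᴴ)) := by
  intro M
  have hs : mp + mm ≠ 0 := by
    intro h
    have := congrArg Complex.im h
    simp at this
    linarith
  rw [posDef_iff_dotProduct_mulVec]
  constructor
  · unfold Matrix.IsHermitian
    rw [conjTranspose_smul, conjTranspose_sub, conjTranspose_conjTranspose]
    have h1 : star ((2 * Complex.I)⁻¹) = -(2 * Complex.I)⁻¹ := by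
      simp [Complex.ext_iff]
    rw [h1, neg_smul, ← smul_neg, neg_sub]
  · intro x hx
    set a := x 0 with ha
    set b := x 1 with hb
    set z := star x ⬝ᵥ ((2 * Complex.I)⁻¹ • (M - Mᴴ)) *ᵥ x with hz
    set N : ℂ := 2*mp*mm*(star a * a) - (mp - mm)*(star a * b + star b * a)
        - 2*(star b * b) with hN
    set Nc : ℂ := 2*(star mp)*(star mm)*(star a * a)
        - (star mp - star mm)*(a * star b + b * star a) - 2*(star b * b) with hNc
    have key : z * (2 * ((mp + mm) * (star mp + star mm))) =
        -Complex.I * (N * (star mp + star mm) - Nc * (mp + mm)) := by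
      rw [hz, hN, hNc]
      simp only [M, dotProduct, Matrix.mulVec, Fin.sum_univ_two,
        Matrix.smul_apply, Matrix.sub_apply, Matrix.conjTranspose_apply,
        Matrix.of_apply, Matrix.cons_val', Matrix.cons_val_zero, Matrix.cons_val_one,
        Matrix.head_cons, Matrix.head_fin_const, Pi.star_apply, smul_eq_mul,
        Matrix.empty_val', Matrix.cons_val_fin_one, star_neg, star_inv₀, star_add,
        star_mul', star_sub, star_ofNat]
      have h2I : (2 * Complex.I) ≠ 0 := by simp [Complex.I_ne_zero]
      have hs' : (starRingEnd ℂ) mp + (starRingEnd ℂ) mm ≠ 0 := by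
        rw [← map_add]; exact star_ne_zero.mpr hs
      have hs'' : star mp + star mm ≠ 0 := hs'
      field_simp
      ring_nf
      simp only [Complex.I_sq]
      ring
    have hab : a ≠ 0 ∨ b ≠ 0 := by
      by_contra h
      push_neg at h
      apply hx
      funext i
      fin_cases i
      · exact h.1
      · exact h.2
    set W : ℂ := -Complex.I * (N * (star mp + star mm) - Nc * (mp + mm)) with hW
    have hpos : 0 < W := by
      rw [Complex.lt_def]
      constructor
      · simp only [hW, hN, hNc, Complex.neg_re, Complex.mul_re, Complex.mul_im,
          Complex.sub_re, Complex.sub_im, Complex.add_re, Complex.add_im,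
          Complex.neg_im, Complex.I_re, Complex.I_im, Complex.conj_re, Complex.conj_im,
          RCLike.star_def, Complex.re_ofNat, Complex.im_ofNat, Complex.zero_re, Complex.zero_im]
        by_cases hA : a = 0
        · have hb0 : b ≠ 0 := by
            rcases hab with h | h
            · exact absurd hA h
            · exact h
          have hb2 : 0 < b.re * b.re + b.im * b.im := by
            have := Complex.normSq_pos.mpr hb0
            simpa [Complex.normSq_apply] using this
          have ha1 : a.re = 0 := by rw [hA]; simp
          have ha2 : a.im = 0 := by rw [hA]; simp
          rw [ha1, ha2]
          nlinarith [mul_pos (add_pos hp hm) hb2]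
        · have ha2 : 0 < a.re * a.re + a.im * a.im := by
            have := Complex.normSq_pos.mpr hA
            simpa [Complex.normSq_apply] using this
          nlinarith [mul_nonneg hp.le (sq_nonneg (mm.re * a.re - b.re)),
            mul_nonneg hp.le (sq_nonneg (mm.re * a.im - b.im)),
            mul_nonneg hm.le (sq_nonneg (mp.re * a.re + b.re)),
            mul_nonneg hm.le (sq_nonneg (mp.re * a.im + b.im)),
            mul_pos (mul_pos (mul_pos hp hm) (add_pos hp hm)) ha2]
      · simp only [hW, hN, hNc, Complex.neg_re, Complex.mul_re, Complex.mul_im,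
          Complex.sub_re, Complex.sub_im, Complex.add_re, Complex.add_im,
          Complex.neg_im, Complex.I_re, Complex.I_im, Complex.conj_re, Complex.conj_im,
          RCLike.star_def, Complex.re_ofNat, Complex.im_ofNat, Complex.zero_re, Complex.zero_im]
        ring
    have ht : (0:ℝ) < 2 * Complex.normSq (mp + mm) := by
      have := Complex.normSq_pos.mpr hs
      linarith
    have hzt : z * (((2 * Complex.normSq (mp + mm) : ℝ) : ℂ)) = W := by
      rw [← key]
      congr 1
      have hst : star mp + star mm = (starRingEnd ℂ) (mp + mm) := by rw [map_add]; rfl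
      rw [hst, Complex.mul_conj]
      push_cast
      ring
    rw [Complex.lt_def] at hpos ⊢
    obtain ⟨h1, h2⟩ := hpos
    have hre : z.re * (2 * Complex.normSq (mp + mm)) = W.re := by
      rw [← hzt]; simp [Complex.mul_re]
    have him : z.im * (2 * Complex.normSq (mp + mm)) = W.im := by
      rw [← hzt]; simp [Complex.mul_im]
    constructor
    · simp only [Complex.zero_re] at h1 ⊢
      nlinarith [h1, ht, hre]
    · have hW0 : W.im = 0 := by rw [← h2]; simp
      rw [hW0] at him
      simp only [Complex.zero_im]
      exact ((mul_eq_zero.mp him).resolve_right (ne_of_gt ht)).symm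
end
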